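/- arXiv:2109.12685 — 7 statements merged into one kernel-verified Lean document; each statement's English description precedes it below -/
import Mathlib

section
/- In a finite binary-action supermodular game, if y and z are both reachable from x by monotone improvement paths, then the componentwise supremum y ∨ z is also reachable from x by a monotone improvement path. -/
variable {V : Type*} [Fintype V] [DecidableEq V]

/-- A configuration assigns each player an action in `{-1, +1}` (as integers). -/
def Conf (x : V → ℤ) : Prop := ∀ i, x i = 1 ∨ x i = -1

/-- Supermodularity (increasing differences) for a binary-action game with
utilities `u`. -/
def Supermodular (u : V → (V → ℤ) → ℝ) : Prop :=
  ∀ (i : V) (x y : V → ℤ), Conf x → Conf y → (∀ j, j ≠ i → y j ≤ x j) →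
    u i (Function.update y i 1) - u i (Function.update y i (-1)) ≤
      u i (Function.update x i 1) - u i (Function.update x i (-1))

/-- One step of an improvement path: a single player flips her action and
strictly increases her utility. -/
def ImpStep (u : V → (V → ℤ) → ℝ) (x y : V → ℤ) : Prop :=
  ∃ i : V, y = Function.update x i (-(x i)) ∧ u i x < u i y

/-- A monotone improvement step (the active player switches from -1 to +1). -/
def MonStep (u : V → (V → ℤ) → ℝ) (x y : V → ℤ) : Prop :=
  ImpStep u x y ∧ x ≤ y

/-- An anti-monotone improvement step (the active player switches from +1 to -1). -/
def AntiStep (u : V → (V → ℤ) → ℝ) (x y : V → ℤ) : Prop :=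
  ImpStep u x y ∧ y ≤ x

/-- `y` is reachable from `x` by an improvement path. -/
def ImpReach (u : V → (V → ℤ) → ℝ) : (V → ℤ) → (V → ℤ) → Prop :=
  Relation.ReflTransGen (ImpStep u)

/-- `y` is reachable from `x` by a monotone improvement path. -/
def MonReach (u : V → (V → ℤ) → ℝ) : (V → ℤ) → (V → ℤ) → Prop :=
  Relation.ReflTransGen (MonStep u)

/-- `y` is reachable from `x` by an anti-monotone improvement path. -/
def AntiReach (u : V → (V → ℤ) → ℝ) : (V → ℤ) → (V → ℤ) → Prop :=
  Relation.ReflTransGen (AntiStep u)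

/-- `x` is a (pure strategy Nash) equilibrium: no unilateral flip strictly
improves the deviator's utility. -/
def IsNash (u : V → (V → ℤ) → ℝ) (x : V → ℤ) : Prop :=
  ∀ i : V, u i (Function.update x i (-(x i))) ≤ u i x

open Classical in
/-- `fplus u x` is the componentwise supremum of the set of configurations
reachable from `x` by monotone improvement paths. -/
noncomputable def fplus (u : V → (V → ℤ) → ℝ) (x : V → ℤ) : V → ℤ :=
  fun i => if ∃ y, MonReach u x y ∧ y i = 1 then 1 else -1

open Classical in
/-- `fminus u x` is the componentwise infimum of the set of configurations
reachable from `x` by anti-monotone improvement paths. -/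
noncomputable def fminus (u : V → (V → ℤ) → ℝ) (x : V → ℤ) : V → ℤ :=
  fun i => if ∃ y, AntiReach u x y ∧ y i = -1 then -1 else 1

/-!
A monotone improvement path from `x` can be replayed above any configuration `c ≥ x`: when the
path raises player `i` at a profile `a ≤ c`, either `i` already plays `+1` in `c`, or, by
increasing differences, raising `i` is at least as profitable at `c` as it was at `a`. Replaying
the path from `x` to `z` above `y` thus leads from `y` to `y ⊔ z`, and `y` is reachable from `x`.
-/

section

omit [Fintype V]

omit [DecidableEq V] in
theorem Conf.sup {a b : V → ℤ} (ha : Conf a) (hb : Conf b) : Conf (a ⊔ b) := by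
  intro i
  rcases ha i with h | h <;> rcases hb i with h' | h' <;> simp [h, h']

theorem Conf.update_one {a : V → ℤ} (ha : Conf a) (i : V) : Conf (Function.update a i 1) := by
  intro j
  by_cases hj : j = i
  · simp [hj]
  · simpa [hj] using ha j

theorem sup_update_of_le {a c : V → ℤ} (hac : a ≤ c) (i : V) (v : ℤ) :
    c ⊔ Function.update a i v = Function.update c i (c i ⊔ v) := by
  funext j
  by_cases hj : j = i
  · subst hj; simp
  · simpa [hj] using hac j

variable {u : V → (V → ℤ) → ℝ}

theorem MonStep.exists_update {a b : V → ℤ} (ha : Conf a) (h : MonStep u a b) :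
    ∃ i, a i = -1 ∧ b = Function.update a i 1 ∧ u i a < u i b := by
  obtain ⟨⟨i, rfl, hu⟩, hle⟩ := h
  have hai : a i = -1 := by
    have := hle i
    rcases ha i with h | h <;> simp_all
  exact ⟨i, hai, by rw [hai, neg_neg], hu⟩

theorem MonStep.conf {a b : V → ℤ} (ha : Conf a) (h : MonStep u a b) : Conf b := by
  obtain ⟨i, -, rfl, -⟩ := h.exists_update ha
  exact ha.update_one i

theorem MonReach.conf {a b : V → ℤ} (ha : Conf a) (h : MonReach u a b) : Conf b := by
  induction h with
  | refl => exact ha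
  | tail _ hs ih => exact hs.conf ih

theorem MonReach.le {a b : V → ℤ} (h : MonReach u a b) : a ≤ b := by
  induction h with
  | refl => exact le_rfl
  | tail _ hs ih => exact ih.trans hs.2

theorem MonStep.monReach_sup_of_le (hsm : Supermodular u) {a b c : V → ℤ} (ha : Conf a)
    (hc : Conf c) (hab : MonStep u a b) (hac : a ≤ c) : MonReach u c (c ⊔ b) := by
  obtain ⟨i, hai, rfl, hu⟩ := hab.exists_update ha
  rw [sup_update_of_le hac]
  rcases hc i with hci | hci
  · rw [hci, sup_of_le_right le_rfl, ← hci, Function.update_eq_self]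
    exact .refl
  · have hgain := hsm i c a hc ha fun j _ => hac j
    have haa : Function.update a i (-1) = a := by rw [← hai, Function.update_eq_self]
    have hcc : Function.update c i (-1) = c := by rw [← hci, Function.update_eq_self]
    rw [haa, hcc] at hgain
    rw [hci, show (-1 : ℤ) ⊔ 1 = 1 by norm_num]
    exact .single ⟨⟨i, by rw [hci, neg_neg], by linarith⟩, le_update_self_iff.2 (by omega)⟩

theorem MonReach.monReach_sup_of_le (hsm : Supermodular u) {a b c : V → ℤ} (ha : Conf a)
    (hc : Conf c) (hab : MonReach u a b) (hac : a ≤ c) : MonReach u c (c ⊔ b) := by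
  induction hab with
  | refl => rw [sup_of_le_left hac]; exact .refl
  | @tail b b' hb hstep ih =>
    have hlift := hstep.monReach_sup_of_le hsm (MonReach.conf ha hb)
      (hc.sup (MonReach.conf ha hb)) le_sup_right
    rw [sup_assoc, sup_of_le_right hstep.2] at hlift
    exact ih.trans hlift

end

/-- if `y` and `z` are reachable from `x` by monotone improvement
paths, then so is `y ⊔ z`. -/
theorem monReach_sup (u : V → (V → ℤ) → ℝ) (hsm : Supermodular u)
    (x y z : V → ℤ) (hx : Conf x)
    (hy : MonReach u x y) (hz : MonReach u x z) :
    MonReach u x (y ⊔ z) :=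
  hy.trans (hz.monReach_sup_of_le hsm hx (hy.conf hx) hy.le)
end

section
/- In a finite binary-action supermodular game, if configuration y is reachable from x by an arbitrary improvement path, then there exist configurations y' ≥ y reachable from x by a monotone improvement path and y'' ≤ y reachable from x by an anti-monotone improvement path. -/
variable {V : Type*} [Fintype V] [DecidableEq V]

lemma conf_impStep {u : V → (V → ℤ) → ℝ} {x y : V → ℤ} (hx : Conf x)
    (h : ImpStep u x y) : Conf y := by
  obtain ⟨i, rfl, -⟩ := h
  intro j
  rcases eq_or_ne j i with rfl | hj
  · rcases hx j with h | h <;> simp [h]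
  · simpa [Function.update_of_ne hj] using hx j

lemma conf_impReach {u : V → (V → ℤ) → ℝ} {x y : V → ℤ} (hx : Conf x)
    (h : ImpReach u x y) : Conf y := by
  induction h with
  | refl => exact hx
  | tail _ hstep ih => exact conf_impStep ih hstep

lemma conf_update {x : V → ℤ} (hx : Conf x) (i : V) {v : ℤ} (hv : v = 1 ∨ v = -1) :
    Conf (Function.update x i v) := by
  intro j
  rcases eq_or_ne j i with rfl | hj
  · simpa using hv
  · simpa [Function.update_of_ne hj] using hx j

lemma mon_half (u : V → (V → ℤ) → ℝ) (hsm : Supermodular u) {x y : V → ℤ}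
    (hx : Conf x) (hxy : ImpReach u x y) :
    ∃ y', Conf y' ∧ y ≤ y' ∧ MonReach u x y' := by
  induction hxy with
  | refl => exact ⟨x, hx, le_refl x, Relation.ReflTransGen.refl⟩
  | @tail b c hb hstep ih =>
    obtain ⟨b', hb'Conf, hbb', hreach⟩ := ih
    have hbConf : Conf b := conf_impReach hx hb
    obtain ⟨i, hc, hlt⟩ := hstep
    rcases hbConf i with hbi | hbi
    · -- player i flips from 1 to -1 : c ≤ b ≤ b'
      refine ⟨b', hb'Conf, fun j => ?_, hreach⟩
      rcases eq_or_ne j i with rfl | hj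
      · rw [hc]
        simp only [Function.update_self, hbi]
        rcases hb'Conf j with h | h <;> omega
      · rw [hc, Function.update_of_ne hj]; exact hbb' j
    · rcases hb'Conf i with hb'i | hb'i
      · -- b' already has 1 at i
        refine ⟨b', hb'Conf, fun j => ?_, hreach⟩
        rcases eq_or_ne j i with rfl | hj
        · rw [hc]; simp [hbi, hb'i]
        · rw [hc, Function.update_of_ne hj]; exact hbb' j
      · -- flip i to 1 at b'
        have hkey := hsm i b' b hb'Conf hbConf (fun j _ => hbb' j)
        have hb_eq : Function.update b i (-1 : ℤ) = b := by
          rw [← hbi]; exact Function.update_eq_self i b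
        have hb'_eq : Function.update b' i (-1 : ℤ) = b' := by
          rw [← hb'i]; exact Function.update_eq_self i b'
        have hc_eq : c = Function.update b i 1 := by rw [hc, hbi]; norm_num
        rw [hb_eq, hb'_eq] at hkey
        rw [hc_eq] at hlt
        have hlt' : u i b' < u i (Function.update b' i 1) := by linarith
        have hle : b' ≤ Function.update b' i 1 := by
          intro j
          rcases eq_or_ne j i with rfl | hj
          · simp [hb'i]
          · simp [Function.update_of_ne hj]
        refine ⟨Function.update b' i 1, conf_update hb'Conf i (Or.inl rfl), fun j => ?_,
          hreach.tail ⟨⟨i, by rw [hb'i]; norm_num, hlt'⟩, hle⟩⟩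
        rcases eq_or_ne j i with rfl | hj
        · rw [hc_eq]; simp
        · rw [hc_eq, Function.update_of_ne hj, Function.update_of_ne hj]
          exact hbb' j

lemma anti_half (u : V → (V → ℤ) → ℝ) (hsm : Supermodular u) {x y : V → ℤ}
    (hx : Conf x) (hxy : ImpReach u x y) :
    ∃ y'', Conf y'' ∧ y'' ≤ y ∧ AntiReach u x y'' := by
  induction hxy with
  | refl => exact ⟨x, hx, le_refl x, Relation.ReflTransGen.refl⟩
  | @tail b c hb hstep ih =>
    obtain ⟨b', hb'Conf, hbb', hreach⟩ := ih
    have hbConf : Conf b := conf_impReach hx hb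
    obtain ⟨i, hc, hlt⟩ := hstep
    rcases hbConf i with hbi | hbi
    · rcases hb'Conf i with hb'i | hb'i
      · -- flip i to -1 at b'
        have hkey := hsm i b b' hbConf hb'Conf (fun j _ => hbb' j)
        have hb_eq : Function.update b i (1 : ℤ) = b := by
          rw [← hbi]; exact Function.update_eq_self i b
        have hb'_eq : Function.update b' i (1 : ℤ) = b' := by
          rw [← hb'i]; exact Function.update_eq_self i b'
        have hc_eq : c = Function.update b i (-1) := by rw [hc, hbi]
        rw [hb_eq, hb'_eq] at hkey
        rw [hc_eq] at hlt
        have hlt' : u i b' < u i (Function.update b' i (-1)) := by linarith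
        have hle : Function.update b' i (-1) ≤ b' := by
          intro j
          rcases eq_or_ne j i with rfl | hj
          · simp [hb'i]
          · simp [Function.update_of_ne hj]
        refine ⟨Function.update b' i (-1), conf_update hb'Conf i (Or.inr rfl), fun j => ?_,
          hreach.tail ⟨⟨i, by rw [hb'i], hlt'⟩, hle⟩⟩
        rcases eq_or_ne j i with rfl | hj
        · rw [hc_eq]; simp
        · rw [hc_eq, Function.update_of_ne hj, Function.update_of_ne hj]
          exact hbb' j
      · -- b' already has -1 at i
        refine ⟨b', hb'Conf, fun j => ?_, hreach⟩
        rcases eq_or_ne j i with rfl | hj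
        · rw [hc]; simp [hbi, hb'i]
        · rw [hc, Function.update_of_ne hj]; exact hbb' j
    · -- player i flips from -1 to 1 : b' ≤ b ≤ c
      refine ⟨b', hb'Conf, fun j => ?_, hreach⟩
      rcases eq_or_ne j i with rfl | hj
      · rw [hc]
        simp only [Function.update_self, hbi]
        rcases hb'Conf j with h | h <;> omega
      · rw [hc, Function.update_of_ne hj]; exact hbb' j

/-- if `y` is reachable from `x` by an improvement path, then some
`y' ≥ y` is reachable from `x` by a monotone improvement path and some
`y'' ≤ y` is reachable from `x` by an anti-monotone improvement path. -/
theorem impReach_sandwich (u : V → (V → ℤ) → ℝ) (hsm : Supermodular u)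
    (x y : V → ℤ) (hx : Conf x) (hxy : ImpReach u x y) :
    (∃ y', y ≤ y' ∧ MonReach u x y') ∧ (∃ y'', y'' ≤ y ∧ AntiReach u x y'') := by
  obtain ⟨y', _, h1, h2⟩ := mon_half u hsm hx hxy
  obtain ⟨y'', _, h3, h4⟩ := anti_half u hsm hx hxy
  exact ⟨⟨y', h1, h2⟩, ⟨y'', h3, h4⟩⟩
end

section
/- In a finite binary-action supermodular game, the map f⁺ sending a configuration x to the componentwise supremum of all configurations reachable from x by monotone improvement paths is monotone nondecreasing: x ≤ x' implies f⁺(x) ≤ f⁺(x'). -/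
variable {V : Type*} [Fintype V] [DecidableEq V]

lemma conf_of_monstep {u : V → (V → ℤ) → ℝ} {x y : V → ℤ} (hx : Conf x)
    (h : MonStep u x y) : Conf y := by
  obtain ⟨⟨i, hy, _⟩, _⟩ := h
  intro j
  subst hy
  by_cases hj : j = i
  · subst hj
    simp only [Function.update_self]
    rcases hx j with h | h <;> simp [h]
  · simp only [Function.update_of_ne hj]
    exact hx j

lemma mon_lift {u : V → (V → ℤ) → ℝ} (hsm : Supermodular u) :
    ∀ {x y : V → ℤ}, MonReach u x y → ∀ x', Conf x → Conf x' → x ≤ x' →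
      ∃ y', Conf y' ∧ y ≤ y' ∧ MonReach u x' y' := by
  intro x y h
  induction h using Relation.ReflTransGen.head_induction_on with
  | refl =>
    intro x' hx hx' hle
    exact ⟨x', hx', hle, Relation.ReflTransGen.refl⟩
  | head hstep _ ih =>
    rename_i a z _
    intro x' hx hx' hle
    obtain ⟨⟨i, hz, hu⟩, haz⟩ := hstep
    have hzconf : Conf z := conf_of_monstep hx ⟨⟨i, hz, hu⟩, haz⟩
    -- show a i = -1
    have hai : a i = -1 := by
      have h1 : a i ≤ z i := haz i
      rw [hz, Function.update_self] at h1
      rcases hx i with h | h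
      · omega
      · exact h
    have hzeq : z = Function.update a i 1 := by rw [hz, hai]; norm_num
    have haeq : a = Function.update a i (-1) := by
      funext j
      by_cases hj : j = i
      · subst hj; rw [Function.update_self, hai]
      · rw [Function.update_of_ne hj]
    rcases hx' i with hxi' | hxi'
    · -- x' i = 1 already, so z ≤ x'
      have hzx' : z ≤ x' := by
        intro j
        by_cases hj : j = i
        · subst hj; rw [hzeq, Function.update_self, hxi']
        · rw [hzeq, Function.update_of_ne hj]; exact hle j
      exact ih x' hzconf hx' hzx'
    · -- x' i = -1, use supermodularity to flip i at x'
      set z' := Function.update x' i 1 with hz'def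
      have hx'eq : x' = Function.update x' i (-1) := by
        funext j
        by_cases hj : j = i
        · subst hj; rw [Function.update_self, hxi']
        · rw [Function.update_of_ne hj]
      have hsmi := hsm i x' a hx' hx (fun j _ => hle j)
      have hu' : u i x' < u i z' := by
        rw [hzeq] at hu
        conv at hu => lhs; rw [haeq]
        have : u i x' ≤ u i z' + (u i (Function.update a i (-1)) - u i (Function.update a i 1)) := by
          rw [hz'def]
          conv_lhs => rw [hx'eq]
          linarith [hsmi]
        linarith
      have hstep' : MonStep u x' z' := by
        refine ⟨⟨i, ?_, hu'⟩, ?_⟩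
        · rw [hz'def, hxi']; norm_num
        · intro j
          by_cases hj : j = i
          · subst hj; rw [hz'def, Function.update_self, hxi']; norm_num
          · rw [hz'def, Function.update_of_ne hj]
      have hz'conf : Conf z' := conf_of_monstep hx' hstep'
      have hzz' : z ≤ z' := by
        intro j
        by_cases hj : j = i
        · subst hj; rw [hzeq, hz'def, Function.update_self, Function.update_self]
        · rw [hzeq, hz'def, Function.update_of_ne hj, Function.update_of_ne hj]
          exact hle j
      obtain ⟨y', hy'c, hyy', hreach⟩ := ih z' hzconf hz'conf hzz'
      exact ⟨y', hy'c, hyy', Relation.ReflTransGen.head hstep' hreach⟩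

lemma conf_of_monreach {u : V → (V → ℤ) → ℝ} {x y : V → ℤ} (hx : Conf x)
    (h : MonReach u x y) : Conf y := by
  induction h with
  | refl => exact hx
  | tail _ hstep ih => exact conf_of_monstep ih hstep

/-- the map `fplus` is monotone nondecreasing. -/
theorem fplus_monotone (u : V → (V → ℤ) → ℝ) (hsm : Supermodular u)
    (x x' : V → ℤ) (hx : Conf x) (hx' : Conf x') (hle : x ≤ x') :
    fplus u x ≤ fplus u x' := by
  intro i
  unfold fplus
  split_ifs with h1 h2 h2
  · exact le_refl 1
  · exfalso
    obtain ⟨y, hreach, hyi⟩ := h1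
    obtain ⟨y', hy'c, hyy', hreach'⟩ := mon_lift hsm hreach x' hx hx' hle
    have : y' i = 1 := by
      have h3 : y i ≤ y' i := hyy' i
      rcases hy'c i with h | h
      · exact h
      · rw [hyi, h] at h3; norm_num at h3
    exact h2 ⟨y', hreach', this⟩
  · norm_num
  · exact le_refl _
end

section
/- The network coordination game on G with external field h admits a co-existent Nash equilibrium (an equilibrium x* not equal to ±𝟏) if and only if G is not h-indecomposable; that is, G is h-indecomposable if and only if every Nash equilibrium of the game is a consensus configuration. -/
variable {V : Type*} [Fintype V] [DecidableEq V]

/-- Out-degree of node `i` in the weighted graph `W`. -/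
def outdeg (W : V → V → ℝ) (i : V) : ℝ := ∑ j, W i j

/-- `S`-restricted out-degree of node `i`. -/
def wS (W : V → V → ℝ) (i : V) (S : Finset V) : ℝ := ∑ j ∈ S, W i j

/-- Utility of player `i` in the network coordination game on the weighted
graph `W` with external field `h`. -/
def coordU (W : V → V → ℝ) (h : V → ℝ) (i : V) (x : V → ℤ) : ℝ :=
  (x i : ℝ) * (∑ j, W i j * (x j : ℝ)) + h i * (x i : ℝ)

/-- `h`-indecomposability of the network `W`. -/
def Indec (W : V → V → ℝ) (h : V → ℝ) : Prop :=
  ∀ A : Finset V, A.Nonempty → A ≠ Finset.univ →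
    (∃ i ∈ A, wS W i A + h i < wS W i Aᶜ) ∨
    (∃ i ∈ Aᶜ, wS W i Aᶜ - h i < wS W i A)

/-- `(h⁻, h⁺)`-indecomposability of the network `W`. -/
def IndecPair (W : V → V → ℝ) (hm hp : V → ℝ) : Prop :=
  ∀ A : Finset V, A.Nonempty → A ≠ Finset.univ →
    (∃ i ∈ A, wS W i A + hp i < wS W i Aᶜ) ∨
    (∃ i ∈ Aᶜ, wS W i Aᶜ - hm i < wS W i A)

lemma nash_char (W : V → V → ℝ) (h : V → ℝ) (hdiag : ∀ i, W i i = 0)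
    (x : V → ℤ) (hx : Conf x) (A : Finset V) (hA : ∀ i, i ∈ A ↔ x i = 1) :
    IsNash (coordU W h) x ↔
      (∀ i ∈ A, wS W i Aᶜ ≤ wS W i A + h i) ∧
      (∀ i ∈ Aᶜ, wS W i A ≤ wS W i Aᶜ - h i) := by
  have hS : ∀ i, (∑ j, W i j * (x j : ℝ)) = wS W i A - wS W i Aᶜ := by
    intro i
    rw [← Finset.sum_add_sum_compl A (fun j => W i j * (x j : ℝ))]
    unfold wS
    have h1 : ∑ j ∈ A, W i j * (x j : ℝ) = ∑ j ∈ A, W i j := by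
      refine Finset.sum_congr rfl fun j hj => ?_
      rw [(hA j).1 hj]; push_cast; ring
    have h2 : ∑ j ∈ Aᶜ, W i j * (x j : ℝ) = -∑ j ∈ Aᶜ, W i j := by
      rw [← Finset.sum_neg_distrib]
      refine Finset.sum_congr rfl fun j hj => ?_
      have hj1 : x j = -1 := by
        rcases hx j with h' | h'
        · exact absurd ((hA j).2 h') (Finset.mem_compl.mp hj)
        · exact h'
      rw [hj1]; push_cast; ring
    rw [h1, h2]; ring
  have key : ∀ i, (coordU W h i (Function.update x i (-(x i))) ≤ coordU W h i x) ↔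
      0 ≤ (x i : ℝ) * ((wS W i A - wS W i Aᶜ) + h i) := by
    intro i
    have hsum : ∑ j, W i j * ((Function.update x i (-(x i)) j : ℤ) : ℝ)
        = ∑ j, W i j * (x j : ℝ) := by
      refine Finset.sum_congr rfl fun j _ => ?_
      by_cases hj : j = i
      · subst hj; rw [hdiag j]; ring
      · rw [Function.update_of_ne hj]
    unfold coordU
    rw [hsum, hS i, Function.update_self]
    push_cast
    constructor <;> intro h' <;> nlinarith [h']
  unfold IsNash
  constructor
  · intro hn
    constructor
    · intro i hi
      have := (key i).1 (hn i)
      have hx1 : x i = 1 := (hA i).1 hi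
      rw [hx1] at this; push_cast at this; linarith
    · intro i hi
      have := (key i).1 (hn i)
      have hx1 : x i = -1 := by
        rcases hx i with h' | h'
        · exact absurd ((hA i).2 h') (Finset.mem_compl.mp hi)
        · exact h'
      rw [hx1] at this; push_cast at this; linarith
  · rintro ⟨hp, hm⟩ i
    refine (key i).2 ?_
    by_cases hi : i ∈ A
    · have hx1 : x i = 1 := (hA i).1 hi
      have := hp i hi
      rw [hx1]; push_cast; linarith
    · have hic : i ∈ Aᶜ := Finset.mem_compl.mpr hi
      have hx1 : x i = -1 := by
        rcases hx i with h' | h'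
        · exact absurd ((hA i).2 h') hi
        · exact h'
      have := hm i hic
      rw [hx1]; push_cast; linarith

/-- the coordination game admits a co-existent Nash equilibrium
iff `G` is not `h`-indecomposable; equivalently, `G` is `h`-indecomposable iff
every Nash equilibrium is a consensus configuration. -/
theorem polarizable_iff_not_indec (W : V → V → ℝ) (h : V → ℝ)
    (hW : ∀ i j, 0 ≤ W i j) (hdiag : ∀ i, W i i = 0) :
    ((∃ x : V → ℤ, Conf x ∧ IsNash (coordU W h) x ∧
        x ≠ (fun _ => 1) ∧ x ≠ (fun _ => -1)) ↔ ¬ Indec W h) ∧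
    (Indec W h ↔ ∀ x : V → ℤ, Conf x → IsNash (coordU W h) x →
        (x = (fun _ => 1) ∨ x = (fun _ => -1))) := by
  have main : (∃ x : V → ℤ, Conf x ∧ IsNash (coordU W h) x ∧
      x ≠ (fun _ => 1) ∧ x ≠ (fun _ => -1)) ↔ ¬ Indec W h := by
    constructor
    · rintro ⟨x, hx, hn, hne1, hne2⟩ ind
      set A : Finset V := Finset.univ.filter (fun i => x i = 1) with hAdef
      have hA : ∀ i, i ∈ A ↔ x i = 1 := by intro i; simp [hAdef]
      have hAne : A.Nonempty := by
        by_contra hc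
        apply hne2
        funext i
        rcases hx i with h' | h'
        · exact absurd ⟨i, (hA i).2 h'⟩ hc
        · exact h'
      have hAu : A ≠ Finset.univ := by
        intro hc
        apply hne1
        funext i
        exact (hA i).1 (hc ▸ Finset.mem_univ i)
      have := (nash_char W h hdiag x hx A hA).1 hn
      rcases ind A hAne hAu with ⟨i, hi, hlt⟩ | ⟨i, hi, hlt⟩
      · have := this.1 i hi; linarith
      · have := this.2 i hi; linarith
    · intro hni
      unfold Indec at hni
      push_neg at hni
      obtain ⟨A, hAne, hAu, h1, h2⟩ := hni
      refine ⟨fun i => if i ∈ A then 1 else -1, ?_, ?_, ?_, ?_⟩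
      · intro i; by_cases hi : i ∈ A <;> simp [hi]
      · refine (nash_char W h hdiag _ ?_ A ?_).2 ⟨fun i hi => ?_, fun i hi => ?_⟩
        · intro i; by_cases hi : i ∈ A <;> simp [hi]
        · intro i; by_cases hi : i ∈ A <;> simp [hi]
        · exact h1 i hi
        · exact h2 i hi
      · obtain ⟨i, hi⟩ : (Aᶜ).Nonempty := by
          rwa [Finset.nonempty_iff_ne_empty, ne_eq, Finset.compl_eq_empty_iff]
        intro hc
        have := congrFun hc i
        simp [Finset.mem_compl.mp hi] at this
      · obtain ⟨i, hi⟩ := hAne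
        intro hc
        have := congrFun hc i
        simp [hi] at this
  refine ⟨main, ?_⟩
  rw [← not_iff_not, main.symm]
  push_neg
  tauto
end

section
/- Let G be a directed weighted graph and h⁻ ≤ h⁺ vectors in ℝ^V. If G is not (h⁻,h⁺)-indecomposable, then there exist an external field h* with h⁻ ≤ h* ≤ h⁺ and a co-existent configuration x* ≠ ±𝟏 that is a Nash equilibrium of the network coordination game on G with external field h*. -/
variable {V : Type*} [Fintype V] [DecidableEq V]

/-- if `G` is not `(h⁻,h⁺)`-indecomposable then some field
`h* ∈ [h⁻, h⁺]` yields a co-existent Nash equilibrium. -/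
theorem not_indecPair_coexistent (W : V → V → ℝ) (hm hp : V → ℝ)
    (hW : ∀ i j, 0 ≤ W i j) (hdiag : ∀ i, W i i = 0)
    (hle : hm ≤ hp) (hnot : ¬ IndecPair W hm hp) :
    ∃ hstar : V → ℝ, hm ≤ hstar ∧ hstar ≤ hp ∧
      ∃ x : V → ℤ, Conf x ∧ IsNash (coordU W hstar) x ∧
        x ≠ (fun _ => 1) ∧ x ≠ (fun _ => -1) := by
  rw [IndecPair] at hnot
  push_neg at hnot
  obtain ⟨A, hA1, hA2, hP, hQ⟩ := hnot
  set x : V → ℤ := fun i => if i ∈ A then 1 else -1 with hx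
  set hstar : V → ℝ := fun i => if i ∈ A then hp i else hm i with hhstar
  have hsum : ∀ i, (∑ j, W i j * (x j : ℝ)) = wS W i A - wS W i Aᶜ := by
    intro i
    rw [← Finset.sum_add_sum_compl A (fun j => W i j * (x j : ℝ))]
    have h1 : ∑ j ∈ A, W i j * (x j : ℝ) = wS W i A := by
      apply Finset.sum_congr rfl
      intro j hj; simp [hx, hj, wS]
    have h2 : ∑ j ∈ Aᶜ, W i j * (x j : ℝ) = -wS W i Aᶜ := by
      rw [wS, ← Finset.sum_neg_distrib]
      apply Finset.sum_congr rfl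
      intro j hj
      simp only [Finset.mem_compl] at hj
      simp [hx, hj]
    rw [h1, h2]; ring
  refine ⟨hstar, ?_, ?_, x, ?_, ?_, ?_, ?_⟩
  · intro i; by_cases hi : i ∈ A <;> simp [hhstar, hi, hle i]
  · intro i; by_cases hi : i ∈ A <;> simp [hhstar, hi, hle i]
  · intro i; by_cases hi : i ∈ A <;> simp [hx, hi]
  · intro i
    have hupd : (∑ j, W i j * ((Function.update x i (-(x i))) j : ℝ)) =
        ∑ j, W i j * (x j : ℝ) := by
      apply Finset.sum_congr rfl
      intro j _
      by_cases hj : j = i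
      · subst hj; rw [hdiag]; ring
      · rw [Function.update_of_ne hj]
    have hxi : (Function.update x i (-(x i))) i = -(x i) :=
      Function.update_self i (-(x i)) x
    rw [coordU, coordU, hupd, hxi]
    push_cast
    have key : 0 ≤ (x i : ℝ) * ((∑ j, W i j * (x j : ℝ)) + hstar i) := by
      rw [hsum]
      by_cases hi : i ∈ A
      · have := hP i hi
        simp only [hx, hhstar, if_pos hi]
        push_cast
        linarith
      · have hi' : i ∈ Aᶜ := Finset.mem_compl.mpr hi
        have := hQ i hi'
        simp only [hx, hhstar, if_neg hi]
        push_cast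
        linarith
    nlinarith [key]
  · intro h
    apply hA2
    ext i
    have := congrFun h i
    simp only [hx] at this
    by_cases hi : i ∈ A
    · simpa using hi
    · simp [hi] at this
  · intro h
    obtain ⟨i, hi⟩ := hA1
    have := congrFun h i
    simp [hx, hi] at this
end

section
/- Let G be h-indecomposable with |h_i| ≤ w_i for all i. Then the Nash equilibrium set of the network coordination game on G with external field h is exactly {+𝟏, −𝟏}, and from every configuration x there is an improvement path ending in {+𝟏, −𝟏}; moreover no improvement path leaves {+𝟏, −𝟏} (global I-stability). -/
variable {V : Type*} [Fintype V] [DecidableEq V]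

section AuxProof

variable (W : V → V → ℝ) (h : V → ℝ)

/-- The local field at player `i`. -/
noncomputable def tfun (i : V) (x : V → ℤ) : ℝ := (∑ j, W i j * (x j : ℝ)) + h i

lemma coordU_eq_t (i : V) (x : V → ℤ) :
    coordU W h i x = (x i : ℝ) * tfun W h i x := by
  unfold coordU tfun; ring

lemma tfun_update (j i : V) (x : V → ℤ) (a : ℤ) :
    tfun W h j (Function.update x i a) = tfun W h j x + W j i * ((a : ℝ) - (x i : ℝ)) := by
  unfold tfun
  have hsum : ∀ k ∈ Finset.univ, W j k * ((Function.update x i a k : ℤ) : ℝ)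
      = W j k * (x k : ℝ) + (if k = i then W j i * ((a : ℝ) - (x i : ℝ)) else 0) := by
    intro k _
    by_cases hk : k = i
    · subst hk; simp [Function.update]; ring
    · simp [Function.update, hk]
  rw [Finset.sum_congr rfl hsum, Finset.sum_add_distrib]
  simp [Finset.sum_ite_eq']
  ring

lemma coordU_flip (hdiag : ∀ i, W i i = 0) (i : V) (x : V → ℤ) :
    coordU W h i (Function.update x i (-(x i))) = -((x i : ℝ)) * tfun W h i x := by
  rw [coordU_eq_t, Function.update_self, tfun_update]
  rw [hdiag i]
  push_cast
  ring

lemma impStep_of_neg (hdiag : ∀ i, W i i = 0) (i : V) (x : V → ℤ)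
    (hlt : (x i : ℝ) * tfun W h i x < 0) :
    ImpStep (coordU W h) x (Function.update x i (-(x i))) :=
  ⟨i, rfl, by rw [coordU_eq_t, coordU_flip W h hdiag]; linarith⟩

lemma isNash_iff (hdiag : ∀ i, W i i = 0) (x : V → ℤ) :
    IsNash (coordU W h) x ↔ ∀ i, 0 ≤ (x i : ℝ) * tfun W h i x := by
  unfold IsNash
  constructor
  · intro H i
    have := H i
    rw [coordU_flip W h hdiag, coordU_eq_t] at this
    linarith
  · intro H i
    rw [coordU_flip W h hdiag, coordU_eq_t]
    linarith [H i]

lemma tfun_split (x : V → ℤ) (hc : Conf x) (i : V) :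
    tfun W h i x = wS W i (Finset.univ.filter (fun j => x j = 1))
      - wS W i (Finset.univ.filter (fun j => x j = 1))ᶜ + h i := by
  unfold tfun wS
  rw [← Finset.sum_add_sum_compl (Finset.univ.filter (fun j => x j = 1))
    (fun j => W i j * (x j : ℝ))]
  have h1 : ∑ j ∈ Finset.univ.filter (fun j => x j = 1), W i j * (x j : ℝ)
      = ∑ j ∈ Finset.univ.filter (fun j => x j = 1), W i j := by
    refine Finset.sum_congr rfl fun j hj => ?_
    rw [(Finset.mem_filter.mp hj).2]; simp
  have h2 : ∑ j ∈ (Finset.univ.filter (fun j => x j = 1))ᶜ, W i j * (x j : ℝ)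
      = -∑ j ∈ (Finset.univ.filter (fun j => x j = 1))ᶜ, W i j := by
    rw [← Finset.sum_neg_distrib]
    refine Finset.sum_congr rfl fun j hj => ?_
    have hjn : ¬ x j = 1 := by
      have := Finset.mem_compl.mp hj
      simpa using this
    have : x j = -1 := (hc j).resolve_left hjn
    rw [this]; push_cast; ring
  rw [h1, h2]; ring

/-- Ascend: from any configuration reach an "up-terminal" configuration by an
improvement path of up-flips. -/
lemma ascend (hdiag : ∀ i, W i i = 0) :
    ∀ (n : ℕ) (x : V → ℤ), Conf x →
      (Finset.univ.filter (fun j => x j = -1)).card ≤ n →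
      ∃ z, ImpReach (coordU W h) x z ∧ Conf z ∧ ∀ j, z j = -1 → tfun W h j z ≤ 0 := by
  intro n
  induction n with
  | zero =>
    intro x hc hcard
    have hnone : ∀ j, x j ≠ -1 := by
      intro j hj
      have hmem : j ∈ Finset.univ.filter (fun j => x j = -1) :=
        Finset.mem_filter.mpr ⟨Finset.mem_univ j, hj⟩
      have : (Finset.univ.filter (fun j => x j = -1)) = ∅ :=
        Finset.card_eq_zero.mp (Nat.le_zero.mp hcard)
      rw [this] at hmem
      exact absurd hmem (Finset.notMem_empty j)
    exact ⟨x, Relation.ReflTransGen.refl, hc, fun j hj => absurd hj (hnone j)⟩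
  | succ n ih =>
    intro x hc hcard
    by_cases hterm : ∀ j, x j = -1 → tfun W h j x ≤ 0
    · exact ⟨x, Relation.ReflTransGen.refl, hc, hterm⟩
    push_neg at hterm
    obtain ⟨j, hj, hpos⟩ := hterm
    have hstep : ImpStep (coordU W h) x (Function.update x j (-(x j))) := by
      refine impStep_of_neg W h hdiag j x ?_
      rw [hj]; push_cast; linarith
    set y := Function.update x j (-(x j)) with hy
    have hyj : y j = 1 := by rw [hy, Function.update_self, hj]; ring
    have hcy : Conf y := by
      intro k
      by_cases hk : k = j
      · subst hk; exact Or.inl hyj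
      · rw [hy, Function.update_of_ne hk]; exact hc k
    have hjmem : j ∈ Finset.univ.filter (fun k => x k = -1) :=
      Finset.mem_filter.mpr ⟨Finset.mem_univ j, hj⟩
    have hsub : (Finset.univ.filter (fun k => y k = -1)) ⊆
        (Finset.univ.filter (fun k => x k = -1)).erase j := by
      intro k hk
      rw [Finset.mem_filter] at hk
      have hkj : k ≠ j := by
        intro he; rw [he, hyj] at hk; exact absurd hk.2 (by norm_num)
      refine Finset.mem_erase.mpr ⟨hkj, Finset.mem_filter.mpr ⟨Finset.mem_univ k, ?_⟩⟩
      rw [← hk.2, hy, Function.update_of_ne hkj]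
    have hcard' : (Finset.univ.filter (fun k => y k = -1)).card ≤ n := by
      have h1 := Finset.card_le_card hsub
      rw [Finset.card_erase_of_mem hjmem] at h1
      have h2 : 1 ≤ (Finset.univ.filter (fun k => x k = -1)).card :=
        Finset.card_pos.mpr ⟨j, hjmem⟩
      omega
    obtain ⟨z, hr, hcz, hup⟩ := ih y hcy hcard'
    exact ⟨z, Relation.ReflTransGen.head hstep hr, hcz, hup⟩

/-- Descend: from an up-terminal configuration reach a consensus by an
improvement path of down-flips (or it is already `+𝟏`). -/
lemma descend (hW : ∀ i j, 0 ≤ W i j) (hdiag : ∀ i, W i i = 0) (hind : Indec W h) :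
    ∀ (n : ℕ) (x : V → ℤ), Conf x → (∀ j, x j = -1 → tfun W h j x ≤ 0) →
      (Finset.univ.filter (fun j => x j = 1)).card ≤ n →
      ∃ z, ImpReach (coordU W h) x z ∧
        (z = (fun _ => (1 : ℤ)) ∨ z = (fun _ => (-1 : ℤ))) := by
  intro n
  induction n with
  | zero =>
    intro x hc hup hcard
    refine ⟨x, Relation.ReflTransGen.refl, Or.inr ?_⟩
    funext j
    rcases hc j with h1 | h1
    · exfalso
      have hmem : j ∈ Finset.univ.filter (fun j => x j = 1) :=
        Finset.mem_filter.mpr ⟨Finset.mem_univ j, h1⟩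
      have : (Finset.univ.filter (fun j => x j = 1)) = ∅ :=
        Finset.card_eq_zero.mp (Nat.le_zero.mp hcard)
      rw [this] at hmem
      exact absurd hmem (Finset.notMem_empty j)
    · exact h1
  | succ n ih =>
    intro x hc hup hcard
    by_cases hAe : (Finset.univ.filter (fun j => x j = 1)).Nonempty
    swap
    · refine ⟨x, Relation.ReflTransGen.refl, Or.inr ?_⟩
      funext j
      rcases hc j with h1 | h1
      · exact absurd ⟨j, Finset.mem_filter.mpr ⟨Finset.mem_univ j, h1⟩⟩ hAe
      · exact h1
    by_cases hAu : (Finset.univ.filter (fun j => x j = 1)) = Finset.univ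
    · refine ⟨x, Relation.ReflTransGen.refl, Or.inl ?_⟩
      funext j
      have : j ∈ Finset.univ.filter (fun j => x j = 1) := by
        rw [hAu]; exact Finset.mem_univ j
      exact (Finset.mem_filter.mp this).2
    rcases hind _ hAe hAu with ⟨i, hi, hlt⟩ | ⟨i, hi, hlt⟩
    swap
    · exfalso
      have hxn : x i = -1 := by
        have hni : ¬ x i = 1 := by simpa using Finset.mem_compl.mp hi
        exact (hc i).resolve_left hni
      have h1 := hup i hxn
      rw [tfun_split W h x hc i] at h1
      linarith
    · have hx1 : x i = 1 := (Finset.mem_filter.mp hi).2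
      have htneg : tfun W h i x < 0 := by
        rw [tfun_split W h x hc i]; linarith
      have hstep : ImpStep (coordU W h) x (Function.update x i (-(x i))) := by
        refine impStep_of_neg W h hdiag i x ?_
        rw [hx1]; push_cast; linarith
      set y := Function.update x i (-(x i)) with hy
      have hyi : y i = -1 := by rw [hy, Function.update_self, hx1]
      have hcy : Conf y := by
        intro k
        by_cases hk : k = i
        · subst hk; exact Or.inr hyi
        · rw [hy, Function.update_of_ne hk]; exact hc k
      have hdecr : ∀ j, tfun W h j y ≤ tfun W h j x := by
        intro j
        rw [hy, tfun_update, hx1]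
        push_cast
        nlinarith [hW j i]
      have hupy : ∀ j, y j = -1 → tfun W h j y ≤ 0 := by
        intro j hjm
        by_cases hji : j = i
        · subst hji; linarith [hdecr j]
        · have hxj : x j = -1 := by rw [← hjm, hy, Function.update_of_ne hji]
          linarith [hdecr j, hup j hxj]
      have himem : i ∈ Finset.univ.filter (fun k => x k = 1) := hi
      have hsub : (Finset.univ.filter (fun k => y k = 1)) ⊆
          (Finset.univ.filter (fun k => x k = 1)).erase i := by
        intro k hk
        rw [Finset.mem_filter] at hk
        have hki : k ≠ i := by
          intro he; rw [he, hyi] at hk; exact absurd hk.2 (by norm_num)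
        refine Finset.mem_erase.mpr ⟨hki, Finset.mem_filter.mpr ⟨Finset.mem_univ k, ?_⟩⟩
        rw [← hk.2, hy, Function.update_of_ne hki]
      have hcard' : (Finset.univ.filter (fun k => y k = 1)).card ≤ n := by
        have h1 := Finset.card_le_card hsub
        rw [Finset.card_erase_of_mem himem] at h1
        have h2 : 1 ≤ (Finset.univ.filter (fun k => x k = 1)).card :=
          Finset.card_pos.mpr ⟨i, himem⟩
        omega
      obtain ⟨z, hr, hz⟩ := ih y hcy hupy hcard'
      exact ⟨z, Relation.ReflTransGen.head hstep hr, hz⟩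

end AuxProof
/-- if `G` is `h`-indecomposable and `|h| ≤ w`, then the Nash set
is exactly `{+𝟏, −𝟏}`, every configuration has an improvement path into it, and
no improvement path leaves it. -/
theorem consensus_globally_I_stable (W : V → V → ℝ) (h : V → ℝ)
    (hW : ∀ i j, 0 ≤ W i j) (hdiag : ∀ i, W i i = 0)
    (hind : Indec W h) (habs : ∀ i, |h i| ≤ outdeg W i) :
    (∀ x : V → ℤ, Conf x →
      (IsNash (coordU W h) x ↔ (x = (fun _ => 1) ∨ x = (fun _ => -1)))) ∧
    (∀ x : V → ℤ, Conf x → ∃ y : V → ℤ, ImpReach (coordU W h) x y ∧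
      (y = (fun _ => 1) ∨ y = (fun _ => -1))) ∧
    (∀ x y : V → ℤ, (x = (fun _ => 1) ∨ x = (fun _ => -1)) →
      ImpReach (coordU W h) x y → (y = (fun _ => 1) ∨ y = (fun _ => -1))) := by
  have nash_consensus : ∀ x : V → ℤ,
      (x = (fun _ => (1:ℤ)) ∨ x = (fun _ => (-1:ℤ))) → IsNash (coordU W h) x := by
    rintro x (rfl | rfl)
    · rw [isNash_iff W h hdiag]
      intro i
      have h1 : tfun W h i (fun _ => (1:ℤ)) = outdeg W i + h i := by
        simp [tfun, outdeg]
      have h2 := abs_le.mp (habs i)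
      rw [h1]; push_cast; nlinarith [h2.1]
    · rw [isNash_iff W h hdiag]
      intro i
      have h1 : tfun W h i (fun _ => (-1:ℤ)) = -outdeg W i + h i := by
        simp [tfun, outdeg, ← Finset.sum_neg_distrib]
      have h2 := abs_le.mp (habs i)
      rw [h1]; push_cast; nlinarith [h2.2]
  have nash_only : ∀ x : V → ℤ, Conf x → IsNash (coordU W h) x →
      (x = (fun _ => (1:ℤ)) ∨ x = (fun _ => (-1:ℤ))) := by
    intro x hc hn
    by_contra hcon
    push_neg at hcon
    obtain ⟨hne1, hne2⟩ := hcon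
    have hAe : (Finset.univ.filter (fun j => x j = 1)).Nonempty := by
      by_contra hemp
      apply hne2
      funext j
      rcases hc j with h1 | h1
      · exact absurd ⟨j, Finset.mem_filter.mpr ⟨Finset.mem_univ j, h1⟩⟩ hemp
      · exact h1
    have hAu : (Finset.univ.filter (fun j => x j = 1)) ≠ Finset.univ := by
      intro he
      apply hne1
      funext j
      have : j ∈ Finset.univ.filter (fun j => x j = 1) := by
        rw [he]; exact Finset.mem_univ j
      exact (Finset.mem_filter.mp this).2
    have hN := (isNash_iff W h hdiag x).mp hn
    rcases hind _ hAe hAu with ⟨i, hi, hlt⟩ | ⟨i, hi, hlt⟩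
    · have hx1 : x i = 1 := (Finset.mem_filter.mp hi).2
      have := hN i
      rw [hx1, tfun_split W h x hc i] at this
      push_cast at this
      linarith
    · have hxn : x i = -1 := by
        have hni : ¬ x i = 1 := by simpa using Finset.mem_compl.mp hi
        exact (hc i).resolve_left hni
      have := hN i
      rw [hxn, tfun_split W h x hc i] at this
      push_cast at this
      linarith
  refine ⟨fun x hc => ⟨nash_only x hc, nash_consensus x⟩, ?_, ?_⟩
  · intro x hc
    obtain ⟨z, hr1, hcz, hupz⟩ := ascend W h hdiag
      (Finset.univ.filter (fun j => x j = -1)).card x hc le_rfl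
    obtain ⟨y, hr2, hy⟩ := descend W h hW hdiag hind
      (Finset.univ.filter (fun j => z j = 1)).card z hcz hupz le_rfl
    exact ⟨y, hr1.trans hr2, hy⟩
  · intro x y hx hr
    have hn := nash_consensus x hx
    rcases Relation.ReflTransGen.cases_head hr with rfl | ⟨z, hstep, _⟩
    · exact hx
    · obtain ⟨i, hz, hlt⟩ := hstep
      rw [hz] at hlt
      exact absurd (hn i) (not_le.mpr hlt)
end

section
/- (Robust I-path to consensus) Let h⁻ ≤ h⁺ in ℝ^V and suppose G is h-indecomposable for every h ∈ [h⁻, h⁺]. Then for every configuration x there exists a single finite admissible path (a sequence of single-player flips) of length at most |V| from x to a consensus configuration (+𝟏 or −𝟏) that is an improvement path simultaneously for the coordination game on G with external field h, for every h ∈ [h⁻, h⁺]. -/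
variable {V : Type*} [Fintype V] [DecidableEq V]

section AuxRobust

variable {V : Type*} [Fintype V] [DecidableEq V]

/-- Local field seen by player `i` at configuration `x`. -/
private def SSa (W : V → V → ℝ) (x : V → ℤ) (i : V) : ℝ := ∑ j, W i j * (x j : ℝ)

private lemma SSa_mono (W : V → V → ℝ) (hW : ∀ i j, 0 ≤ W i j) {x y : V → ℤ}
    (hxy : x ≤ y) (i : V) : SSa W x i ≤ SSa W y i :=
  Finset.sum_le_sum fun j _ =>
    mul_le_mul_of_nonneg_left (by exact_mod_cast hxy j) (hW i j)

private lemma SSa_update_eq (W : V → V → ℝ) (hdiag : ∀ i, W i i = 0)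
    (x : V → ℤ) (i : V) (a : ℤ) : SSa W (Function.update x i a) i = SSa W x i := by
  unfold SSa
  refine Finset.sum_congr rfl fun j _ => ?_
  rcases eq_or_ne j i with rfl | hj
  · simp [hdiag]
  · rw [Function.update_of_ne hj]

private lemma mono_improve (W : V → V → ℝ) (hdiag : ∀ i, W i i = 0)
    {hm h : V → ℝ} (hmh : hm ≤ h) {x : V → ℤ} {i : V}
    (hxi : x i = -1) (hgain : 0 < SSa W x i + hm i) :
    coordU W h i x < coordU W h i (Function.update x i 1) := by
  have h1 : coordU W h i (Function.update x i 1) = SSa W x i + h i := by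
    unfold coordU
    rw [Function.update_self,
      show (∑ j, W i j * ((Function.update x i 1 j : ℤ) : ℝ)) = SSa W x i from
        SSa_update_eq W hdiag x i 1]
    push_cast; ring
  have h2 : coordU W h i x = -(SSa W x i) - h i := by
    unfold coordU SSa; rw [hxi]; push_cast; ring
  have := hmh i
  rw [h1, h2]; linarith

private lemma anti_improve (W : V → V → ℝ) (hdiag : ∀ i, W i i = 0)
    {hp h : V → ℝ} (hhp : h ≤ hp) {x : V → ℤ} {i : V}
    (hxi : x i = 1) (hgain : SSa W x i + hp i < 0) :
    coordU W h i x < coordU W h i (Function.update x i (-1)) := by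
  have h1 : coordU W h i (Function.update x i (-1)) = -(SSa W x i) - h i := by
    unfold coordU
    rw [Function.update_self,
      show (∑ j, W i j * ((Function.update x i (-1) j : ℤ) : ℝ)) = SSa W x i from
        SSa_update_eq W hdiag x i (-1)]
    push_cast; ring
  have h2 : coordU W h i x = SSa W x i + h i := by
    unfold coordU SSa; rw [hxi]; push_cast; ring
  have := hhp i
  rw [h1, h2]; linarith

/-- Greedy monotone improvement path (flips `-1 → 1` profitable under `hm`)
terminating at a mono-stuck configuration. -/
private lemma greedy_mono (W : V → V → ℝ) (hm : V → ℝ) :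
    ∀ n (x : V → ℤ), Conf x → (Finset.univ.filter (fun i => x i = -1)).card ≤ n →
    ∃ (l : ℕ) (σ : ℕ → V → ℤ), l ≤ n ∧ σ 0 = x ∧ Conf (σ l) ∧ x ≤ σ l ∧
      (∀ i, σ l i = -1 → SSa W (σ l) i + hm i ≤ 0) ∧
      (∀ k < l, ∃ i, σ k i = -1 ∧ σ (k+1) = Function.update (σ k) i 1 ∧
        0 < SSa W (σ k) i + hm i) := by
  intro n
  induction n with
  | zero =>
    intro x hx hcard
    have hempty : ∀ i, x i ≠ -1 := by
      intro i hi
      have : i ∈ Finset.univ.filter (fun i => x i = -1) := by simp [hi]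
      have := Finset.card_pos.mpr ⟨i, this⟩
      omega
    exact ⟨0, fun _ => x, le_refl 0, rfl, hx, le_refl x,
      fun i hi => absurd hi (hempty i), fun k hk => absurd hk (Nat.not_lt_zero k)⟩
  | succ n ih =>
    intro x hx hcard
    by_cases hstuck : ∀ i, x i = -1 → SSa W x i + hm i ≤ 0
    · exact ⟨0, fun _ => x, Nat.zero_le _, rfl, hx, le_refl x, hstuck,
        fun k hk => absurd hk (Nat.not_lt_zero k)⟩
    · push_neg at hstuck
      obtain ⟨i, hxi, hgain⟩ := hstuck
      set x' := Function.update x i 1 with hx'def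
      have hconf' : Conf x' := by
        intro j
        rcases eq_or_ne j i with rfl | hj
        · left; simp [hx'def]
        · rw [hx'def, Function.update_of_ne hj]; exact hx j
      have hfil : Finset.univ.filter (fun j => x' j = -1)
          = (Finset.univ.filter (fun j => x j = -1)).erase i := by
        ext j
        rcases eq_or_ne j i with rfl | hj
        · simp [hx'def]
        · simp [hx'def, Function.update_of_ne hj, hj]
      have hmem : i ∈ Finset.univ.filter (fun j => x j = -1) := by simp [hxi]
      have hcard' : (Finset.univ.filter (fun j => x' j = -1)).card ≤ n := by
        rw [hfil, Finset.card_erase_of_mem hmem]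
        omega
      obtain ⟨l, σ', hl, hσ0, hconfl, hlel, hstuckl, hsteps⟩ := ih x' hconf' hcard'
      refine ⟨l + 1, fun k => Nat.casesOn k x (fun m => σ' m), by omega, rfl, ?_, ?_, ?_, ?_⟩
      · exact hconfl
      · refine le_trans ?_ hlel
        intro j
        rcases eq_or_ne j i with rfl | hj
        · rw [hx'def, Function.update_self, hxi]; norm_num
        · rw [hx'def, Function.update_of_ne hj]
      · exact hstuckl
      · intro k hk
        cases k with
        | zero =>
          refine ⟨i, hxi, ?_, hgain⟩
          show σ' 0 = Function.update x i 1
          rw [hσ0]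
        | succ m =>
          exact hsteps m (by omega)

/-- Greedy anti-monotone improvement path (flips `1 → -1` profitable under `hp`)
terminating at an anti-stuck configuration. -/
private lemma greedy_anti (W : V → V → ℝ) (hp : V → ℝ) :
    ∀ n (x : V → ℤ), Conf x → (Finset.univ.filter (fun i => x i = 1)).card ≤ n →
    ∃ (l : ℕ) (σ : ℕ → V → ℤ), l ≤ n ∧ σ 0 = x ∧ Conf (σ l) ∧ σ l ≤ x ∧
      (∀ i, σ l i = 1 → 0 ≤ SSa W (σ l) i + hp i) ∧
      (∀ k < l, ∃ i, σ k i = 1 ∧ σ (k+1) = Function.update (σ k) i (-1) ∧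
        SSa W (σ k) i + hp i < 0) := by
  intro n
  induction n with
  | zero =>
    intro x hx hcard
    have hempty : ∀ i, x i ≠ 1 := by
      intro i hi
      have : i ∈ Finset.univ.filter (fun i => x i = 1) := by simp [hi]
      have := Finset.card_pos.mpr ⟨i, this⟩
      omega
    exact ⟨0, fun _ => x, le_refl 0, rfl, hx, le_refl x,
      fun i hi => absurd hi (hempty i), fun k hk => absurd hk (Nat.not_lt_zero k)⟩
  | succ n ih =>
    intro x hx hcard
    by_cases hstuck : ∀ i, x i = 1 → 0 ≤ SSa W x i + hp i
    · exact ⟨0, fun _ => x, Nat.zero_le _, rfl, hx, le_refl x, hstuck,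
        fun k hk => absurd hk (Nat.not_lt_zero k)⟩
    · push_neg at hstuck
      obtain ⟨i, hxi, hgain⟩ := hstuck
      set x' := Function.update x i (-1) with hx'def
      have hconf' : Conf x' := by
        intro j
        rcases eq_or_ne j i with rfl | hj
        · right; simp [hx'def]
        · rw [hx'def, Function.update_of_ne hj]; exact hx j
      have hfil : Finset.univ.filter (fun j => x' j = 1)
          = (Finset.univ.filter (fun j => x j = 1)).erase i := by
        ext j
        rcases eq_or_ne j i with rfl | hj
        · simp [hx'def]
        · simp [hx'def, Function.update_of_ne hj, hj]
      have hmem : i ∈ Finset.univ.filter (fun j => x j = 1) := by simp [hxi]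
      have hcard' : (Finset.univ.filter (fun j => x' j = 1)).card ≤ n := by
        rw [hfil, Finset.card_erase_of_mem hmem]
        omega
      obtain ⟨l, σ', hl, hσ0, hconfl, hlel, hstuckl, hsteps⟩ := ih x' hconf' hcard'
      refine ⟨l + 1, fun k => Nat.casesOn k x (fun m => σ' m), by omega, rfl, ?_, ?_, ?_, ?_⟩
      · exact hconfl
      · refine le_trans hlel ?_
        intro j
        rcases eq_or_ne j i with rfl | hj
        · rw [hx'def, Function.update_self, hxi]; norm_num
        · rw [hx'def, Function.update_of_ne hj]
      · exact hstuckl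
      · intro k hk
        cases k with
        | zero =>
          refine ⟨i, hxi, ?_, hgain⟩
          show σ' 0 = Function.update x i (-1)
          rw [hσ0]
        | succ m =>
          exact hsteps m (by omega)

/-- Along an anti path, later configurations are below earlier ones. -/
private lemma anti_path_lower (W : V → V → ℝ) (hp : V → ℝ)
    {σ : ℕ → V → ℤ} {l : ℕ}
    (hsteps : ∀ k < l, ∃ i, σ k i = 1 ∧ σ (k+1) = Function.update (σ k) i (-1) ∧
      SSa W (σ k) i + hp i < 0) :
    ∀ k ≤ l, σ l ≤ σ k := by
  have hstep : ∀ k < l, σ (k+1) ≤ σ k := by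
    intro k hk
    obtain ⟨i, hxi, hupd, -⟩ := hsteps k hk
    rw [hupd]
    intro j
    rcases eq_or_ne j i with rfl | hj
    · rw [Function.update_self, hxi]; norm_num
    · rw [Function.update_of_ne hj]
  have key : ∀ d k, k + d = l → σ l ≤ σ k := by
    intro d
    induction d with
    | zero =>
      intro k hk
      have hkl : k = l := by omega
      subst hkl; exact le_rfl
    | succ d ihd =>
      intro k hk
      exact le_trans (ihd (k+1) (by omega)) (hstep k (by omega))
  intro k hk
  exact key (l - k) k (by omega)

/-- An anti path starting above an anti-stuck configuration stays above it. -/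
private lemma anti_path_above (W : V → V → ℝ) (hW : ∀ i j, 0 ≤ W i j) (hp : V → ℝ)
    {zt : V → ℤ} (hzt : Conf zt)
    (hstuck : ∀ i, zt i = 1 → 0 ≤ SSa W zt i + hp i)
    {σ : ℕ → V → ℤ} {l : ℕ} (h0 : zt ≤ σ 0)
    (hsteps : ∀ k < l, ∃ i, σ k i = 1 ∧ σ (k+1) = Function.update (σ k) i (-1) ∧
      SSa W (σ k) i + hp i < 0) :
    ∀ k ≤ l, zt ≤ σ k := by
  intro k
  induction k with
  | zero => intro _; exact h0
  | succ k ihk =>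
    intro hk
    have hzk : zt ≤ σ k := ihk (by omega)
    obtain ⟨i, hxi, hupd, hgain⟩ := hsteps k (by omega)
    rw [hupd]
    intro j
    rcases eq_or_ne j i with rfl | hj
    · rw [Function.update_self]
      rcases hzt j with h1 | h1
      · exfalso
        have := SSa_mono W hW hzk j
        have := hstuck j h1
        linarith
      · rw [h1]
    · rw [Function.update_of_ne hj]; exact hzk j

private lemma exists_flip {σ : ℕ → V → ℤ} {l : ℕ} {i : V}
    (h0 : σ 0 i = 1) (hl : σ l i ≠ 1) : ∃ k < l, σ k i = 1 ∧ σ (k+1) i ≠ 1 := by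
  by_contra hcon
  push_neg at hcon
  have : ∀ k ≤ l, σ k i = 1 := by
    intro k
    induction k with
    | zero => intro _; exact h0
    | succ k ihk =>
      intro hk
      exact hcon k (by omega) (ihk (by omega))
  exact hl (this l le_rfl)

end AuxRobust


/-- if `G` is `h`-indecomposable for every `h ∈ [h⁻, h⁺]`, then
from every configuration there is a single admissible path of length at most
`|V|` to a consensus configuration which is an improvement path simultaneously
for every external field `h ∈ [h⁻, h⁺]`. -/
theorem robust_I_path_to_consensus (W : V → V → ℝ) (hm hp : V → ℝ)
    (hW : ∀ i j, 0 ≤ W i j) (hdiag : ∀ i, W i i = 0)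
    (hle : hm ≤ hp)
    (hind : ∀ h : V → ℝ, hm ≤ h → h ≤ hp → Indec W h)
    (x : V → ℤ) (hx : Conf x) :
    ∃ l : ℕ, l ≤ Fintype.card V ∧ ∃ σ : ℕ → (V → ℤ),
      σ 0 = x ∧ (σ l = (fun _ => 1) ∨ σ l = (fun _ => -1)) ∧
      ∀ k < l, ∃ i : V,
        σ (k + 1) = Function.update (σ k) i (-(σ k i)) ∧
        ∀ h : V → ℝ, hm ≤ h → h ≤ hp →
          coordU W h i (σ k) < coordU W h i (σ (k + 1)) := by
  classical
  obtain ⟨ly, σy, hly, hy0, hconfy, hxy, hstucky, hstepsy⟩ :=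
    greedy_mono W hm (Fintype.card V) x hx
      (le_trans (Finset.card_filter_le _ _) (le_of_eq Finset.card_univ))
  by_cases hyall : ∀ i, σy ly i = 1
  · refine ⟨ly, hly, σy, hy0, Or.inl (funext hyall), ?_⟩
    intro k hk
    obtain ⟨i, hxi, hupd, hgain⟩ := hstepsy k hk
    refine ⟨i, by simpa [hxi] using hupd, ?_⟩
    intro h hmh hhp
    rw [hupd]
    exact mono_improve W hdiag hmh hxi hgain
  · obtain ⟨lt, σt, hlt, ht0, hconft, hxt, hstuckt, hstepst⟩ :=
      greedy_anti W hp (Fintype.card V) x hx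
        (le_trans (Finset.card_filter_le _ _) (le_of_eq Finset.card_univ))
    by_cases htall : ∀ i, σt lt i = -1
    · refine ⟨lt, hlt, σt, ht0, Or.inr (funext htall), ?_⟩
      intro k hk
      obtain ⟨i, hxi, hupd, hgain⟩ := hstepst k hk
      refine ⟨i, by simpa [hxi] using hupd, ?_⟩
      intro h hmh hhp
      rw [hupd]
      exact anti_improve W hdiag hhp hxi hgain
    · exfalso
      push_neg at hyall htall
      obtain ⟨i0, hi0⟩ := hyall
      obtain ⟨i1, hi1⟩ := htall
      have hyi0 : σy ly i0 = -1 := (hconfy i0).resolve_left hi0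
      have hti1 : σt lt i1 = 1 := (hconft i1).resolve_right hi1
      set y := σy ly with hydef
      set zt := σt lt with hztdef
      obtain ⟨lz, σz, hlz, hz0, hconfz, hzy, hstuckz, hstepsz⟩ :=
        greedy_anti W hp (Fintype.card V) y hconfy
          (le_trans (Finset.card_filter_le _ _) (le_of_eq Finset.card_univ))
      set z := σz lz with hzdef
      have hzt_le : zt ≤ z :=
        anti_path_above W hW hp hconft hstuckt
          (by rw [hz0]; exact le_trans hxt hxy) hstepsz lz le_rfl
      have hzi1 : z i1 = 1 := by
        have h1 := hzt_le i1
        rw [hti1] at h1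
        rcases hconfz i1 with h | h
        · exact h
        · exfalso; rw [h] at h1; exact absurd h1 (by norm_num)
      have hzi0 : z i0 = -1 := by
        have h1 := hzy i0
        rw [hyi0] at h1
        rcases hconfz i0 with h | h
        · exfalso; rw [h] at h1; exact absurd h1 (by norm_num)
        · exact h
      set B : Finset V := Finset.univ.filter (fun i => z i = 1) with hBdef
      have hBmem : ∀ j, j ∈ B ↔ z j = 1 := fun j => by simp [hBdef]
      have hBne : B.Nonempty := ⟨i1, (hBmem i1).2 hzi1⟩
      have hBuniv : B ≠ Finset.univ := by
        intro hB
        have h1 : i0 ∈ B := hB ▸ Finset.mem_univ i0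
        rw [hBmem i0, hzi0] at h1
        exact absurd h1 (by norm_num)
      have hSSz : ∀ i, SSa W z i = wS W i B - wS W i Bᶜ := by
        intro i
        have h1 : ∑ j ∈ B, W i j * (z j : ℝ) = wS W i B := by
          refine Finset.sum_congr rfl fun j hj => ?_
          rw [(hBmem j).1 hj]; push_cast; ring
        have h2 : ∑ j ∈ Bᶜ, W i j * (z j : ℝ) = -wS W i Bᶜ := by
          rw [wS, ← Finset.sum_neg_distrib]
          refine Finset.sum_congr rfl fun j hj => ?_
          have hzj : z j = -1 :=
            (hconfz j).resolve_left (fun h => (Finset.mem_compl.mp hj) ((hBmem j).2 h))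
          rw [hzj]; push_cast; ring
        calc SSa W z i = ∑ j ∈ B, W i j * ((z j : ℤ) : ℝ)
              + ∑ j ∈ Bᶜ, W i j * ((z j : ℤ) : ℝ) := (Finset.sum_add_sum_compl B _).symm
          _ = wS W i B - wS W i Bᶜ := by rw [h1, h2]; ring
      set hf : V → ℝ := fun i => if z i = 1 then hp i else hm i with hfdef
      have hmf : hm ≤ hf := by
        intro i
        by_cases h : z i = 1
        · show hm i ≤ if z i = 1 then hp i else hm i
          rw [if_pos h]; exact hle i
        · show hm i ≤ if z i = 1 then hp i else hm i
          rw [if_neg h]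
      have hfp : hf ≤ hp := by
        intro i
        by_cases h : z i = 1
        · show (if z i = 1 then hp i else hm i) ≤ hp i
          rw [if_pos h]
        · show (if z i = 1 then hp i else hm i) ≤ hp i
          rw [if_neg h]; exact hle i
      rcases hind hf hmf hfp B hBne hBuniv with ⟨i, hiB, hlt'⟩ | ⟨i, hiBc, hlt'⟩
      · have hz1 : z i = 1 := (hBmem i).1 hiB
        have hfi : hf i = hp i := if_pos hz1
        rw [hfi] at hlt'
        have hst := hstuckz i hz1
        rw [hSSz i] at hst
        linarith
      · have hz1 : z i ≠ 1 := fun h => (Finset.mem_compl.mp hiBc) ((hBmem i).2 h)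
        have hfi : hf i = hm i := if_neg hz1
        rw [hfi] at hlt'
        have hpos : 0 < SSa W z i + hm i := by rw [hSSz i]; linarith
        rcases hconfy i with hy1 | hym
        · have h0i : σz 0 i = 1 := by rw [hz0]; exact hy1
          have hli : σz lz i ≠ 1 := hz1
          obtain ⟨k, hk, hk1, hk2⟩ := exists_flip h0i hli
          obtain ⟨j, hj1, hupd, hgain⟩ := hstepsz k hk
          have hij : j = i := by
            by_contra hne
            apply hk2
            rw [hupd, Function.update_of_ne (fun h => hne h.symm)]
            exact hk1
          subst hij
          have hzk : z ≤ σz k := anti_path_lower W hp hstepsz k (le_of_lt hk)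
          have hmono := SSa_mono W hW hzk j
          have hlej := hle j
          linarith
        · have hst := hstucky i hym
          have hmono := SSa_mono W hW hzy i
          linarith
end
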